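/- For every natural number p: the m-value of (ab)^p equals P(2p), and the m-value of a·(ab)^p equals P(2p+1), where P is the Pell sequence. -/

import Mathlib

def A : Matrix (Fin 2) (Fin 2) ℤ := !![1,1;1,2]
def B : Matrix (Fin 2) (Fin 2) ℤ := !![2,1;1,1]
/-- matrix of a word: `false` is the letter `a`, `true` is the letter `b` -/
def Mw (w : List Bool) : Matrix (Fin 2) (Fin 2) ℤ :=
  (w.map (fun x => if x then B else A)).prod
/-- the m-value: the top-right entry -/
def mval (w : List Bool) : ℤ := Mw w 0 1
def U : Matrix (Fin 2) (Fin 2) ℤ := !![0,-1;1,0]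
def J : Matrix (Fin 2) (Fin 2) ℤ := !![0,1;1,0]
/-- reversal with letters exchanged -/
def Ebar (w : List Bool) : List Bool := (w.map (fun x => !x)).reverse
def pell : ℕ → ℕ
  | 0 => 0
  | 1 => 1
  | n+2 => 2 * pell (n+1) + pell n

lemma pell_add_two (n : ℕ) : pell (n + 2) = 2 * pell (n + 1) + pell n := rfl

lemma Mw_append (u v : List Bool) : Mw (u ++ v) = Mw u * Mw v := by
  simp only [Mw, List.map_append, List.prod_append]

lemma Mw_flatten_replicate (w : List Bool) (p : ℕ) :
    Mw (List.replicate p w).flatten = Mw w ^ p := by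
  induction p with
  | zero => rfl
  | succ p ih => rw [List.replicate_succ, List.flatten_cons, Mw_append, ih, pow_succ']

lemma Mw_ab : Mw [false, true] = !![3, 2; 4, 3] := by
  simp [Mw, A, B]

lemma Mw_ab_pow (p : ℕ) : Mw [false, true] ^ p =
    !![(pell (2 * p + 1) : ℤ) - pell (2 * p), pell (2 * p);
       2 * pell (2 * p), (pell (2 * p + 1) : ℤ) - pell (2 * p)] := by
  induction p with
  | zero => simp [pell, Matrix.one_fin_two]
  | succ p ih =>
    have h₁ : pell (2 * (p + 1)) = 2 * pell (2 * p + 1) + pell (2 * p) := pell_add_two _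
    have h₂ : pell (2 * (p + 1) + 1) = 2 * pell (2 * (p + 1)) + pell (2 * p + 1) :=
      pell_add_two _
    rw [pow_succ, ih, Mw_ab, Matrix.mul_fin_two, h₂, h₁]
    ext i j
    fin_cases i <;> fin_cases j <;> (push_cast; simp; ring)

theorem stmt16 (p : ℕ) :
    mval ((List.replicate p [false, true]).flatten) = (pell (2*p) : ℤ) ∧
    mval ([false] ++ (List.replicate p [false, true]).flatten) = (pell (2*p+1) : ℤ) := by
  have hA : Mw [false] = A := by simp [Mw]
  simp only [mval, Mw_append, hA, Mw_flatten_replicate, Mw_ab_pow, A, Matrix.mul_fin_two]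
  simp
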